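/- arXiv:1505.02370 — 9 statements merged into one kernel-verified Lean document; each statement's English description precedes it below -/
import Mathlib

section
/- Let d be a positive integer and let V be an ℝ-linear subspace of the polynomial ring ℝ[x₁,…,x_d] that is both translation invariant and dilation invariant. If (p_n) is a sequence of polynomials in V and p is a polynomial such that for every x ∈ ℝ^d the sequence of values p_n(x) converges to p(x), then p belongs to V. -/
/-!
Dilation invariance makes `V` a monomial subspace: if `q ∈ V`, then `y ↦ q(y·x)` is a polynomial
in `y` whose coefficients are the monomial terms of `q`, and these lie in `V` because no nonzero
polynomial vanishes on all of `ℝ^d`. Translating `x^β` by a unit vector and extracting the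
monomial terms of the result shows that the set `S = {β | x^β ∈ V}` is downward closed.

If the limit `p` were not in `V`, pick `β` maximal among the exponents of `p` outside `S`. The
mixed forward difference `Δ^β q (0)`, a finite combination of point evaluations, kills every
monomial `x^γ` with `β ≰ γ`; by downward closedness it therefore vanishes on `V`, and by the
maximality of `β` it equals `β! · coeff_β p ≠ 0` on `p`. Being continuous for pointwise
convergence, it must also vanish on `p`.
-/

open MvPolynomial Filter fwdDiff

theorem Submodule.mem_of_forall_sum_eval_monomial_smul_mem {K M σ : Type*} [Field K] [Infinite K]
    [AddCommGroup M] [Module K M] {V : Submodule K M} {s : Finset (σ →₀ ℕ)}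
    {v : (σ →₀ ℕ) → M} (h : ∀ y : σ → K, ∑ β ∈ s, eval y (monomial β 1) • v β ∈ V)
    {β : σ →₀ ℕ} (hβ : β ∈ s) : v β ∈ V := by
  classical
  rw [← Subspace.forall_mem_dualAnnihilator_apply_eq_zero_iff]
  intro φ hφ
  have hP : ∑ γ ∈ s, monomial γ (φ (v γ)) = 0 := by
    refine MvPolynomial.funext fun y => ?_
    simpa [map_sum, eval_monomial, mul_comm] using
      (Submodule.mem_dualAnnihilator φ).1 hφ _ (h y)
  simpa [coeff_sum, coeff_monomial, hβ] using congrArg (coeff β) hP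

namespace MvPolynomial

section Invariance

variable {K σ : Type*} [Field K]

def IsTranslationInvariant (V : Submodule K (MvPolynomial σ K)) : Prop :=
  ∀ p ∈ V, ∀ y : σ → K, bind₁ (fun i => X i + C (y i)) p ∈ V

def IsDilationInvariant (V : Submodule K (MvPolynomial σ K)) : Prop :=
  ∀ p ∈ V, ∀ y : σ → K, bind₁ (fun i => C (y i) * X i) p ∈ V

theorem bind₁_C_mul_X_eq_sum (y : σ → K) (q : MvPolynomial σ K) :
    bind₁ (fun i => C (y i) * X i) q
      = ∑ β ∈ q.support, eval y (monomial β 1) • monomial β (coeff β q) := by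
  conv_lhs => rw [q.as_sum, map_sum]
  refine Finset.sum_congr rfl fun β _ => ?_
  rw [bind₁_monomial, eval_monomial, one_mul, smul_eq_C_mul, monomial_eq]
  simp only [Finsupp.prod, mul_pow, Finset.prod_mul_distrib, map_prod, map_pow]
  ring

theorem coeff_single_X_add_one_pow [DecidableEq σ] (i : σ) (n k : ℕ) :
    coeff (Finsupp.single i k) ((X i + 1 : MvPolynomial σ K) ^ n) = n.choose k := by
  simp +contextual [add_pow, coeff_sum, ← Nat.cast_comm, ← nsmul_eq_mul, coeff_X_pow,
    (Finsupp.single_injective i).eq_iff, Nat.choose_eq_zero_of_lt]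

theorem bind₁_X_add_single_monomial [DecidableEq σ] (i : σ) (β : σ →₀ ℕ) :
    bind₁ (fun j => X j + C (Pi.single i (1 : K) j)) (monomial β 1)
      = monomial (β.erase i) 1 * (X i + 1) ^ β i := by
  have hsplit : monomial β (1 : K) = monomial (β.erase i) 1 * X i ^ β i := by
    rw [X_pow_eq_monomial, monomial_mul, one_mul, Finsupp.erase_add_single]
  rw [hsplit, map_mul, map_pow, bind₁_X_right, Pi.single_eq_same, C_1]
  congr 1
  rw [bind₁_monomial, C_1, one_mul, monomial_eq, C_1, one_mul]
  refine Finset.prod_congr rfl fun j hj => ?_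
  have hji : j ≠ i := by simp_all
  rw [Pi.single_eq_of_ne hji, C_0, add_zero]

theorem coeff_update_bind₁_X_add_single_monomial [DecidableEq σ] (i : σ) (β : σ →₀ ℕ)
    (k : ℕ) :
    coeff (β.update i k)
        (bind₁ (fun j => X j + C (Pi.single i (1 : K) j)) (monomial β 1) : MvPolynomial σ K)
      = (β i).choose k := by
  have hle : β.erase i ≤ β.update i k := fun j => by
    by_cases hj : j = i <;> simp [hj]
  have hsub : β.update i k - β.erase i = Finsupp.single i k := by
    ext j
    by_cases hj : j = i <;> simp [hj]
  rw [bind₁_X_add_single_monomial, coeff_monomial_mul', if_pos hle, hsub, one_mul,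
    coeff_single_X_add_one_pow]

variable {V : Submodule K (MvPolynomial σ K)}

theorem IsDilationInvariant.monomial_coeff_mem [Infinite K] (hD : IsDilationInvariant V)
    {q : MvPolynomial σ K} (hq : q ∈ V) (β : σ →₀ ℕ) : monomial β (coeff β q) ∈ V := by
  by_cases hβ : β ∈ q.support
  · exact Submodule.mem_of_forall_sum_eval_monomial_smul_mem
      (fun y => bind₁_C_mul_X_eq_sum y q ▸ hD q hq y) hβ
  · simp [notMem_support_iff.1 hβ]

theorem IsDilationInvariant.monomial_one_mem [Infinite K] (hD : IsDilationInvariant V)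
    {q : MvPolynomial σ K} (hq : q ∈ V) {β : σ →₀ ℕ} (hβ : β ∈ q.support) :
    monomial β 1 ∈ V := by
  have := V.smul_mem (coeff β q)⁻¹ (hD.monomial_coeff_mem hq β)
  rwa [smul_monomial, smul_eq_mul, inv_mul_cancel₀ (mem_support_iff.1 hβ)] at this

theorem mem_of_forall_monomial_one_mem {q : MvPolynomial σ K}
    (h : ∀ β ∈ q.support, monomial β 1 ∈ V) : q ∈ V := by
  rw [q.as_sum]
  refine V.sum_mem fun β hβ => ?_
  simpa [smul_monomial] using V.smul_mem (coeff β q) (h β hβ)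

theorem monomial_update_mem [CharZero K] (hT : IsTranslationInvariant V)
    (hD : IsDilationInvariant V) {β : σ →₀ ℕ} (hβ : monomial β 1 ∈ V) (i : σ) {k : ℕ}
    (hk : k ≤ β i) : monomial (β.update i k) 1 ∈ V := by
  classical
  refine hD.monomial_one_mem (hT _ hβ (Pi.single i 1)) ?_
  rw [mem_support_iff, coeff_update_bind₁_X_add_single_monomial]
  exact_mod_cast (Nat.choose_pos hk).ne'

theorem monomial_one_mem_of_le [CharZero K] (hT : IsTranslationInvariant V)
    (hD : IsDilationInvariant V) {β γ : σ →₀ ℕ} (hβ : monomial β 1 ∈ V) (hγ : γ ≤ β) :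
    monomial γ 1 ∈ V := by
  classical
  suffices ∀ s : Finset σ, ∀ β, monomial β 1 ∈ V → γ ≤ β → (∀ j ∉ s, γ j = β j) →
      monomial γ 1 ∈ V from
    this β.support β hβ hγ fun j hj => by simpa [Finsupp.notMem_support_iff.1 hj] using hγ j
  intro s
  induction s using Finset.induction_on with
  | empty =>
    intro β hβ _ hγβ
    rwa [Finsupp.ext fun j => hγβ j (Finset.notMem_empty j)]
  | insert i s _ ih =>
    intro β hβ hγ hγβ
    refine ih (β.update i (γ i)) (monomial_update_mem hT hD hβ i (hγ i)) (fun j => ?_)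
      (fun j hj => ?_)
    · by_cases hj : j = i
      · simp [hj]
      · simpa [hj] using hγ j
    · by_cases hji : j = i
      · simp [hji]
      · simpa [hji] using hγβ j (by simp [hji, hj])

end Invariance

section ForwardDifference

variable {R σ : Type*} [CommRing R]

theorem fwdDiff_iter_pow_eval_zero (n j : ℕ) :
    (Δ_[1])^[n] (fun r : R => r ^ j) 0
      = ∑ k ∈ Finset.range (n + 1), (-1 : R) ^ (n - k) * n.choose k * (k : R) ^ j := by
  simp [fwdDiff_iter_eq_sum_shift, zsmul_eq_mul]

variable [Fintype σ] [DecidableEq σ]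

/-- The mixed forward difference `Δ_{e_1}^{β_1} ⋯ Δ_{e_n}^{β_n} q` evaluated at `0`. -/
noncomputable def fwdDiffAtZero (R : Type*) [CommRing R] (β : σ →₀ ℕ) :
    MvPolynomial σ R →ₗ[R] R :=
  ∑ k ∈ Fintype.piFinset fun i => Finset.range (β i + 1),
    (∏ i, (-1 : R) ^ (β i - k i) * (β i).choose (k i)) • (aeval fun i => (k i : R)).toLinearMap

theorem fwdDiffAtZero_apply (β : σ →₀ ℕ) (q : MvPolynomial σ R) :
    fwdDiffAtZero R β q = ∑ k ∈ Fintype.piFinset fun i => Finset.range (β i + 1),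
      (∏ i, (-1 : R) ^ (β i - k i) * (β i).choose (k i)) * eval (fun i => (k i : R)) q := by
  simp [fwdDiffAtZero]

theorem fwdDiffAtZero_monomial (β γ : σ →₀ ℕ) (c : R) :
    fwdDiffAtZero R β (monomial γ c) = c * ∏ i, (Δ_[1])^[β i] (fun r : R => r ^ γ i) 0 := by
  simp only [fwdDiffAtZero_apply, fwdDiff_iter_pow_eval_zero, Finset.prod_univ_sum,
    Finset.mul_sum, eval_monomial, Finsupp.prod_pow]
  refine Finset.sum_congr rfl fun k _ => ?_
  rw [Finset.prod_mul_distrib, Finset.prod_mul_distrib, Finset.prod_mul_distrib]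
  ring

theorem fwdDiffAtZero_monomial_of_lt {β γ : σ →₀ ℕ} {i : σ} (h : γ i < β i) (c : R) :
    fwdDiffAtZero R β (monomial γ c) = 0 := by
  rw [fwdDiffAtZero_monomial, Finset.prod_eq_zero (Finset.mem_univ i), mul_zero]
  rw [fwdDiff_iter_pow_eq_zero_of_lt h, Pi.zero_apply]

theorem fwdDiffAtZero_monomial_self (β : σ →₀ ℕ) (c : R) :
    fwdDiffAtZero R β (monomial β c) = c * ∏ i, ((β i).factorial : R) := by
  simp [fwdDiffAtZero_monomial, fwdDiff_iter_eq_factorial]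

theorem fwdDiffAtZero_eq_sum_le (β : σ →₀ ℕ) (q : MvPolynomial σ R) :
    fwdDiffAtZero R β q
      = ∑ γ ∈ q.support with β ≤ γ, fwdDiffAtZero R β (monomial γ (coeff γ q)) := by
  conv_lhs => rw [q.as_sum, map_sum]
  refine (Finset.sum_filter_of_ne fun γ _ hne => ?_).symm
  by_contra hle
  obtain ⟨i, hi⟩ := not_forall.1 hle
  exact hne (fwdDiffAtZero_monomial_of_lt (not_le.1 hi) _)

theorem tendsto_fwdDiffAtZero [TopologicalSpace R] [IsTopologicalRing R] (β : σ →₀ ℕ)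
    {q : ℕ → MvPolynomial σ R} {p : MvPolynomial σ R}
    (h : ∀ x, Tendsto (fun n => eval x (q n)) atTop (nhds (eval x p))) :
    Tendsto (fun n => fwdDiffAtZero R β (q n)) atTop (nhds (fwdDiffAtZero R β p)) := by
  simp only [fwdDiffAtZero_apply]
  exact tendsto_finsetSum _ fun k _ => (h _).const_mul _

end ForwardDifference

section Closedness

variable {K σ : Type*} [Field K] [CharZero K] [Fintype σ] [DecidableEq σ]
  {V : Submodule K (MvPolynomial σ K)}

theorem fwdDiffAtZero_eq_zero_of_mem (hT : IsTranslationInvariant V)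
    (hD : IsDilationInvariant V) {β : σ →₀ ℕ} (hβ : monomial β 1 ∉ V) {q : MvPolynomial σ K}
    (hq : q ∈ V) : fwdDiffAtZero K β q = 0 := by
  rw [fwdDiffAtZero_eq_sum_le]
  refine Finset.sum_eq_zero fun γ hγ => ?_
  obtain ⟨hγq, hle⟩ := Finset.mem_filter.1 hγ
  exact absurd (monomial_one_mem_of_le hT hD (hD.monomial_one_mem hq hγq) hle) hβ

theorem mem_of_tendsto_eval [TopologicalSpace K] [IsTopologicalRing K] [T2Space K]
    (hT : IsTranslationInvariant V) (hD : IsDilationInvariant V) {q : ℕ → MvPolynomial σ K}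
    (hq : ∀ n, q n ∈ V) {p : MvPolynomial σ K}
    (h : ∀ x, Tendsto (fun n => eval x (q n)) atTop (nhds (eval x p))) : p ∈ V := by
  classical
  by_contra hp
  have hne : (p.support.filter (monomial · 1 ∉ V)).Nonempty := by
    contrapose! hp
    exact mem_of_forall_monomial_one_mem fun γ hγ => by
      simpa [hγ] using Finset.filter_eq_empty_iff.1 hp hγ
  obtain ⟨β, hβ, hβmax⟩ := Finset.exists_maximal hne
  obtain ⟨hβp, hβV⟩ := Finset.mem_filter.1 hβ
  have hp_eval : fwdDiffAtZero K β p = coeff β p * ∏ i, ((β i).factorial : K) := by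
    rw [fwdDiffAtZero_eq_sum_le, Finset.sum_eq_single_of_mem β (by simp [hβp]),
      fwdDiffAtZero_monomial_self]
    intro γ hγ hne
    obtain ⟨hγp, hle⟩ := Finset.mem_filter.1 hγ
    have hγV : monomial γ 1 ∉ V := fun hγV => hβV (monomial_one_mem_of_le hT hD hγV hle)
    exact absurd (le_antisymm (hβmax (Finset.mem_filter.2 ⟨hγp, hγV⟩) hle) hle) hne
  have hp_zero : fwdDiffAtZero K β p = 0 :=
    tendsto_nhds_unique (tendsto_fwdDiffAtZero β h)
      (by simp [fwdDiffAtZero_eq_zero_of_mem hT hD hβV (hq _)])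
  rw [hp_eval] at hp_zero
  exact mul_ne_zero (mem_support_iff.1 hβp)
    (Finset.prod_ne_zero_iff.2 fun i _ => Nat.cast_ne_zero.2 (β i).factorial_ne_zero) hp_zero

end Closedness

end MvPolynomial

theorem stmt_0_general (d : ℕ) (V : Submodule ℝ (MvPolynomial (Fin d) ℝ))
    (htrans : ∀ p ∈ V, ∀ y : Fin d → ℝ,
      bind₁ (fun i => (X i : MvPolynomial (Fin d) ℝ) + C (y i)) p ∈ V)
    (hdil : ∀ p ∈ V, ∀ y : Fin d → ℝ,
      bind₁ (fun i => (C (y i) : MvPolynomial (Fin d) ℝ) * X i) p ∈ V)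
    (pn : ℕ → MvPolynomial (Fin d) ℝ) (hpn : ∀ n, pn n ∈ V)
    (p : MvPolynomial (Fin d) ℝ)
    (hconv : ∀ x : Fin d → ℝ,
      Tendsto (fun n => eval x (pn n)) atTop (nhds (eval x p))) :
    p ∈ V :=
  mem_of_tendsto_eval htrans hdil hpn hconv

theorem stmt_0 (d : ℕ) (hd : 0 < d) (V : Submodule ℝ (MvPolynomial (Fin d) ℝ))
    (htrans : ∀ p ∈ V, ∀ y : Fin d → ℝ,
      bind₁ (fun i => (X i : MvPolynomial (Fin d) ℝ) + C (y i)) p ∈ V)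
    (hdil : ∀ p ∈ V, ∀ y : Fin d → ℝ,
      bind₁ (fun i => (C (y i) : MvPolynomial (Fin d) ℝ) * X i) p ∈ V)
    (pn : ℕ → MvPolynomial (Fin d) ℝ) (hpn : ∀ n, pn n ∈ V)
    (p : MvPolynomial (Fin d) ℝ)
    (hconv : ∀ x : Fin d → ℝ,
      Tendsto (fun n => eval x (pn n)) atTop (nhds (eval x p))) :
    p ∈ V :=
  stmt_0_general d V htrans hdil pn hpn p hconv
end

section
/- Let p be a polynomial in ℝ[x₁,…,x_d]. Then the linear span of the set of all translates {τ_y p : y ∈ ℝ^d} equals the linear span of the set of all iterated partial derivatives {∂^α p : α ∈ ℕ^d}. In particular, the smallest translation-invariant linear subspace containing p is spanned by the partial derivatives of p. -/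
/-!
Taylor's formula `τ_y p = ∑_α (y^α / α!) ∂^α p`, a finite sum because `∂^α p = 0` once some
`α i` exceeds the total degree of `p`, puts every translate in the span of the derivatives.
Conversely `y ↦ τ_y p` is a polynomial map with coefficients `∂^α p / α!`: a linear functional
vanishing on all translates turns it into a polynomial vanishing on all of `ℝ^d`, hence zero,
so every coefficient lies in the span of the translates. That span is translation invariant
because `τ_y ∘ τ_z = τ_{y+z}`, so it is the smallest invariant subspace containing `p`.
-/

open MvPolynomial

/-- The iterated formal partial derivative `∂^α`, applying `pderiv i` exactly
`α i` times in each variable `i`. -/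
noncomputable def iterPDeriv {d : ℕ} (α : Fin d → ℕ) :
    Module.End ℝ (MvPolynomial (Fin d) ℝ) :=
  (List.ofFn fun i : Fin d =>
    ((pderiv i).toLinearMap : Module.End ℝ (MvPolynomial (Fin d) ℝ)) ^ (α i)).prod

namespace MvPolynomial

variable {R σ : Type*} [CommSemiring R]

theorem pderiv_pow_monomial (i : σ) (k : ℕ) (u : σ →₀ ℕ) (c : R) :
    ((pderiv i).toLinearMap ^ k : Module.End R (MvPolynomial σ R)) (monomial u c) =
      monomial (u - Finsupp.single i k) (c * (u i).descFactorial k) := by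
  induction k with
  | zero => simp
  | succ k ih =>
    rw [pow_succ', Module.End.mul_apply, ih, Derivation.coeFn_coe, pderiv_monomial,
      tsub_tsub, ← Finsupp.single_add, Finsupp.tsub_apply, Finsupp.single_eq_same,
      Nat.descFactorial_succ, Nat.cast_mul, mul_comm ((u i - k : ℕ) : R), mul_assoc]

theorem list_prod_pderiv_pow_monomial (α : σ → ℕ) {l : List σ} (hl : l.Nodup)
    (u : σ →₀ ℕ) (c : R) :
    (l.map fun i => ((pderiv i).toLinearMap ^ α i : Module.End R (MvPolynomial σ R))).prod
        (monomial u c) =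
      monomial (u - (l.map fun i => Finsupp.single i (α i)).sum)
        (c * (l.map fun i => ((u i).descFactorial (α i) : R)).prod) := by
  induction l generalizing u c with
  | nil => simp
  | cons j l ih =>
    obtain ⟨hj, hl⟩ := List.nodup_cons.mp hl
    have hlj : (l.map fun i => Finsupp.single i (α i)).sum j = 0 := by
      rw [← Finsupp.applyAddHom_apply, map_list_sum, List.map_map]
      refine List.sum_eq_zero fun x hx => ?_
      obtain ⟨i, hi, rfl⟩ := List.mem_map.mp hx
      exact Finsupp.single_eq_of_ne (by rintro rfl; exact hj hi)
    rw [List.map_cons, List.prod_cons, Module.End.mul_apply, ih hl, pderiv_pow_monomial,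
      Finsupp.tsub_apply, hlj, tsub_zero, List.map_cons, List.sum_cons, List.map_cons,
      List.prod_cons, tsub_tsub, add_comm]
    ring_nf

theorem bind₁_X_add_C_bind₁_X_add_C (y z : σ → R) (p : MvPolynomial σ R) :
    bind₁ (fun i => X i + C (y i)) (bind₁ (fun i => X i + C (z i)) p) =
      bind₁ (fun i => X i + C (y i + z i)) p := by
  simp [bind₁_bind₁, add_assoc]

end MvPolynomial

open MvPolynomial Finset

theorem add_pow_eq_sum_range_of_le {R : Type*} [CommSemiring R] (a b : R) {n N : ℕ}
    (h : n ≤ N) : (a + b) ^ n = ∑ k ∈ range (N + 1), a ^ k * b ^ (n - k) * n.choose k := by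
  rw [add_pow]
  refine sum_subset (range_subset_range.mpr (by omega)) fun k _ hk => ?_
  rw [Nat.choose_eq_zero_of_lt (by simpa using hk), Nat.cast_zero, mul_zero]

theorem iterPDeriv_monomial {d : ℕ} (α : Fin d → ℕ) (u : Fin d →₀ ℕ) (c : ℝ) :
    iterPDeriv α (monomial u c) =
      monomial (u - Finsupp.equivFunOnFinite.symm α)
        (c * ∏ i, ((u i).descFactorial (α i) : ℝ)) := by
  have h := list_prod_pderiv_pow_monomial α (List.nodup_finRange d) u c
  rw [← List.ofFn_eq_map, ← List.ofFn_eq_map, ← List.ofFn_eq_map, List.sum_ofFn,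
    List.prod_ofFn] at h
  rw [iterPDeriv, h, Finsupp.equivFunOnFinite_symm_eq_sum]

theorem iterPDeriv_eq_zero_of_totalDegree_lt {d : ℕ} {α : Fin d → ℕ}
    {p : MvPolynomial (Fin d) ℝ} {i : Fin d} (h : p.totalDegree < α i) : iterPDeriv α p = 0 := by
  rw [p.as_sum, map_sum]
  refine sum_eq_zero fun u hu => ?_
  have hui : u i < α i :=
    ((monomial_le_degreeOf i hu).trans (degreeOf_le_totalDegree p i)).trans_lt h
  rw [iterPDeriv_monomial, prod_eq_zero (mem_univ i)
    (by rw [Nat.descFactorial_eq_zero_iff_lt.mpr hui, Nat.cast_zero]), mul_zero, map_zero]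

theorem bind₁_X_add_C_monomial_eq_sum {d N : ℕ} (y : Fin d → ℝ) {u : Fin d →₀ ℕ} (c : ℝ)
    (hu : ∀ i, u i ≤ N) :
    bind₁ (fun i => X i + C (y i)) (monomial u c) =
      ∑ α ∈ Fintype.piFinset fun _ => range (N + 1),
        (∏ i, y i ^ α i) • (∏ i, ((α i).factorial : ℝ))⁻¹ • iterPDeriv α (monomial u c) := by
  have hexp : ∀ i, (X i + C (y i)) ^ u i =
      ∑ k ∈ range (N + 1), C (y i ^ k * (u i).choose k) * X i ^ (u i - k) := by
    intro i
    rw [add_comm, add_pow_eq_sum_range_of_le _ _ (hu i)]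
    refine sum_congr rfl fun k _ => ?_
    rw [map_mul, map_pow, map_natCast]
    ring
  rw [bind₁_monomial, prod_subset (subset_univ _) fun i _ hi => by
      rw [Finsupp.notMem_support_iff.mp hi, pow_zero],
    prod_congr rfl fun i _ => hexp i, prod_univ_sum, mul_sum]
  refine sum_congr rfl fun α _ => ?_
  rw [iterPDeriv_monomial, smul_monomial, smul_monomial, monomial_eq,
    Finsupp.prod_fintype _ _ fun i => pow_zero _, prod_mul_distrib, ← map_prod, ← mul_assoc,
    ← C_mul]
  simp only [Finsupp.tsub_apply, Finsupp.coe_equivFunOnFinite_symm, smul_eq_mul]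
  congr 2
  simp only [Nat.descFactorial_eq_factorial_mul_choose, Nat.cast_mul, prod_mul_distrib]
  have : ∏ i, ((α i).factorial : ℝ) ≠ 0 := prod_ne_zero_iff.mpr fun i _ => by positivity
  field_simp

theorem bind₁_X_add_C_eq_sum_iterPDeriv {d N : ℕ} (y : Fin d → ℝ) {p : MvPolynomial (Fin d) ℝ}
    (hp : p.totalDegree ≤ N) :
    bind₁ (fun i => X i + C (y i)) p =
      ∑ α ∈ Fintype.piFinset fun _ => range (N + 1),
        (∏ i, y i ^ α i) • (∏ i, ((α i).factorial : ℝ))⁻¹ • iterPDeriv α p := by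
  conv_lhs => rw [p.as_sum]
  rw [map_sum, sum_congr rfl fun u hu => bind₁_X_add_C_monomial_eq_sum y _ fun i =>
    ((monomial_le_degreeOf i hu).trans (degreeOf_le_totalDegree p i)).trans hp, sum_comm]
  refine sum_congr rfl fun α _ => ?_
  rw [← smul_sum, ← smul_sum, ← map_sum, ← p.as_sum]

theorem mem_span_range_of_eq_sum_prod_pow_smul {K V σ : Type*} [Field K] [Infinite K]
    [Fintype σ] [AddCommGroup V] [Module K V] {f : (σ → K) → V} {A : Finset (σ → ℕ)}
    {v : (σ → ℕ) → V} (hf : ∀ y, f y = ∑ α ∈ A, (∏ i, y i ^ α i) • v α) {α : σ → ℕ}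
    (hα : α ∈ A) : v α ∈ Submodule.span K (Set.range f) := by
  classical
  set W := Submodule.span K (Set.range f)
  rw [← Submodule.Quotient.mk_eq_zero W, ← Module.forall_dual_apply_eq_zero_iff K]
  intro φ
  set g := φ ∘ₗ W.mkQ
  set P : MvPolynomial σ K := ∑ β ∈ A, monomial (Finsupp.equivFunOnFinite.symm β) (g (v β))
  have hP : P = 0 := by
    refine MvPolynomial.funext fun y => ?_
    have hgf : g (f y) = 0 := by
      rw [LinearMap.comp_apply, Submodule.mkQ_apply, (Submodule.Quotient.mk_eq_zero W).mpr
        (Submodule.subset_span (Set.mem_range_self y)), map_zero]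
    rw [hf, map_sum] at hgf
    simp [P, eval_monomial, Finsupp.prod_fintype, mul_comm, ← hgf]
  have := congr_arg (coeff (Finsupp.equivFunOnFinite.symm α)) hP
  rwa [coeff_sum, sum_eq_single_of_mem α hα fun β _ hβ => by
    rw [coeff_monomial, if_neg (Finsupp.equivFunOnFinite.symm.injective.ne hβ)],
    coeff_monomial, if_pos rfl, coeff_zero] at this

theorem span_bind₁_X_add_C_eq_span_iterPDeriv {d : ℕ} (p : MvPolynomial (Fin d) ℝ) :
    Submodule.span ℝ {q | ∃ y : Fin d → ℝ, q = bind₁ (fun i => X i + C (y i)) p} =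
      Submodule.span ℝ {q | ∃ α : Fin d → ℕ, q = iterPDeriv α p} := by
  have htaylor (y : Fin d → ℝ) := bind₁_X_add_C_eq_sum_iterPDeriv y (le_refl p.totalDegree)
  have hrange : Set.range (fun y : Fin d → ℝ => bind₁ (fun i => X i + C (y i)) p) =
      {q | ∃ y : Fin d → ℝ, q = bind₁ (fun i => X i + C (y i)) p} := by
    ext q
    simp only [Set.mem_range, Set.mem_ofPred_eq, eq_comm]
  refine le_antisymm (Submodule.span_le.mpr ?_) (Submodule.span_le.mpr ?_)
  · rintro _ ⟨y, rfl⟩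
    rw [htaylor y]
    exact Submodule.sum_mem _ fun α _ =>
      Submodule.smul_mem _ _ (Submodule.smul_mem _ _ (Submodule.subset_span ⟨α, rfl⟩))
  · rintro _ ⟨α, rfl⟩
    by_cases hα : α ∈ Fintype.piFinset fun _ => range (p.totalDegree + 1)
    · have hfac : ∏ i, ((α i).factorial : ℝ) ≠ 0 :=
        prod_ne_zero_iff.mpr fun i _ => by positivity
      rw [← smul_inv_smul₀ hfac (iterPDeriv α p), SetLike.mem_coe, ← hrange]
      exact Submodule.smul_mem _ _ (mem_span_range_of_eq_sum_prod_pow_smul htaylor hα)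
    · obtain ⟨i, hi⟩ : ∃ i, p.totalDegree < α i := by
        simpa [Fintype.mem_piFinset] using hα
      rw [iterPDeriv_eq_zero_of_totalDegree_lt hi]
      exact zero_mem _

theorem sInf_bind₁_X_add_C_invariant_eq_span {R σ : Type*} [CommSemiring R]
    (p : MvPolynomial σ R) :
    sInf {W : Submodule R (MvPolynomial σ R) | p ∈ W ∧
        ∀ q ∈ W, ∀ y : σ → R, bind₁ (fun i => X i + C (y i)) q ∈ W} =
      Submodule.span R {q | ∃ y : σ → R, q = bind₁ (fun i => X i + C (y i)) p} := by
  refine le_antisymm (sInf_le ⟨Submodule.subset_span ⟨0, by simp [bind₁_X_left]⟩, ?_⟩)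
    (le_sInf fun W ⟨hpW, hW⟩ => Submodule.span_le.mpr ?_)
  · intro q hq y
    refine (Submodule.span_le (p := (Submodule.span R _).comap
      (bind₁ (fun i => X i + C (y i))).toLinearMap)).mpr ?_ hq
    rintro _ ⟨z, rfl⟩
    rw [SetLike.mem_coe, Submodule.mem_comap, AlgHom.toLinearMap_apply,
      bind₁_X_add_C_bind₁_X_add_C]
    exact Submodule.subset_span ⟨y + z, rfl⟩
  · rintro _ ⟨y, rfl⟩
    exact hW p hpW y

theorem stmt_1 (d : ℕ) (p : MvPolynomial (Fin d) ℝ) :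
    Submodule.span ℝ {q : MvPolynomial (Fin d) ℝ |
        ∃ y : Fin d → ℝ, q = bind₁ (fun i => (X i : MvPolynomial (Fin d) ℝ) + C (y i)) p} =
      Submodule.span ℝ {q : MvPolynomial (Fin d) ℝ |
        ∃ α : Fin d → ℕ, q = iterPDeriv α p} ∧
    sInf {W : Submodule ℝ (MvPolynomial (Fin d) ℝ) | p ∈ W ∧
        ∀ q ∈ W, ∀ y : Fin d → ℝ,
          bind₁ (fun i => (X i : MvPolynomial (Fin d) ℝ) + C (y i)) q ∈ W} =
      Submodule.span ℝ {q : MvPolynomial (Fin d) ℝ |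
        ∃ α : Fin d → ℕ, q = iterPDeriv α p} :=
  ⟨span_bind₁_X_add_C_eq_span_iterPDeriv p,
    (sInf_bind₁_X_add_C_invariant_eq_span p).trans (span_bind₁_X_add_C_eq_span_iterPDeriv p)⟩
end

section
/- An ℝ-linear subspace V of the polynomial ring ℝ[x₁,…,x_d] is dilation invariant if and only if there exists a set S ⊆ ℕ^d of multi-indices such that V is the linear span of the monomials {x^α : α ∈ S}, i.e., V admits a basis formed by monomials. -/
/-!
Dilation by `λ` multiplies the coefficient of `x^γ` by `λ^γ`, so spans of monomials are dilation
invariant. Conversely, if `p ∈ V` has two monomials `x^α ≠ x^β` differing in the variable `x_i`,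
then dilating `x_i` by `2` and subtracting `2^{α_i} p` gives an element of `V` with smaller support
that still contains `x^β`; by induction on the support, every monomial of `p` lies in `V`.
-/

namespace MvPolynomial

variable {σ R : Type*} [CommSemiring R]

noncomputable def dilate (lam : σ → R) : MvPolynomial σ R →ₐ[R] MvPolynomial σ R :=
  bind₁ fun i => C (lam i) * X i

theorem dilate_monomial (lam : σ → R) (α : σ →₀ ℕ) (r : R) :
    dilate lam (monomial α r) = monomial α ((α.prod fun i k => lam i ^ k) * r) := by
  rw [dilate, bind₁_monomial, monomial_eq, Finsupp.prod, Finsupp.prod]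
  simp only [mul_pow, Finset.prod_mul_distrib, ← C_pow, ← map_prod, map_mul]
  ring

theorem coeff_dilate (lam : σ → R) (p : MvPolynomial σ R) (γ : σ →₀ ℕ) :
    coeff γ (dilate lam p) = (γ.prod fun i k => lam i ^ k) * coeff γ p := by
  classical
  induction p using induction_on' with
  | monomial α r =>
    rw [dilate_monomial, coeff_monomial, coeff_monomial]
    split_ifs with h
    · rw [h]
    · rw [mul_zero]
  | add p q hp hq => rw [map_add, coeff_add, coeff_add, hp, hq, mul_add]

theorem coeff_dilate_mulSingle [DecidableEq σ] (i : σ) (a : R) (p : MvPolynomial σ R)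
    (γ : σ →₀ ℕ) :
    coeff γ (dilate (Pi.mulSingle i a) p) = a ^ γ i * coeff γ p := by
  rw [coeff_dilate, Finsupp.prod, Finset.prod_eq_single i]
  · simp
  · intro j _ hj; simp [hj]
  · intro hi; simp [Finsupp.notMem_support_iff.mp hi]

theorem support_dilate_subset (lam : σ → R) (p : MvPolynomial σ R) :
    (dilate lam p).support ⊆ p.support := by
  intro γ
  simp only [mem_support_iff, coeff_dilate]
  exact right_ne_zero_of_mul

theorem dilate_mem_restrictSupport (s : Set (σ →₀ ℕ)) (lam : σ → R) {p : MvPolynomial σ R}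
    (hp : p ∈ restrictSupport R s) : dilate lam p ∈ restrictSupport R s :=
  (Finset.coe_subset.mpr (support_dilate_subset lam p)).trans hp

variable {K : Type*} [Field K] [CharZero K]

theorem monomial_coeff_mem_of_forall_dilate_mem {V : Submodule K (MvPolynomial σ K)}
    (hV : ∀ p ∈ V, ∀ lam : σ → K, dilate lam p ∈ V) {p : MvPolynomial σ K} (hp : p ∈ V)
    (β : σ →₀ ℕ) : monomial β (coeff β p) ∈ V := by
  classical
  induction hn : p.support.card using Nat.strong_induction_on generalizing p with
  | _ n ih =>
  by_cases hβ : ∀ α ∈ p.support, α = β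
  · rwa [← eq_monomial_of_support_subset_singleton hβ]
  push Not at hβ
  obtain ⟨α, hα, hαβ⟩ := hβ
  obtain ⟨i, hi⟩ : ∃ i, β i ≠ α i := by
    by_contra! h
    exact hαβ (Finsupp.ext h).symm
  set q := dilate (Pi.mulSingle i (2 : K)) p - (2 : K) ^ α i • p
  have coeff_q (γ : σ →₀ ℕ) : coeff γ q = ((2 : K) ^ γ i - 2 ^ α i) * coeff γ p := by
    rw [coeff_sub, coeff_smul, coeff_dilate_mulSingle, smul_eq_mul, sub_mul]
  have hq_support : q.support ⊆ p.support.erase α := by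
    intro γ hγ
    rw [mem_support_iff, coeff_q] at hγ
    refine Finset.mem_erase.mpr ⟨?_, mem_support_iff.mpr (right_ne_zero_of_mul hγ)⟩
    rintro rfl
    exact hγ (by rw [sub_self, zero_mul])
  have hq_card : q.support.card < n :=
    hn ▸ (Finset.card_le_card hq_support).trans_lt (Finset.card_lt_card (Finset.erase_ssubset hα))
  have hc : (2 : K) ^ β i - 2 ^ α i ≠ 0 := by
    rw [sub_ne_zero]
    exact_mod_cast (Nat.pow_right_injective le_rfl).ne hi
  have hq_mem := ih _ hq_card (sub_mem (hV p hp _) (V.smul_mem _ hp)) rfl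
  rw [coeff_q, ← smul_eq_mul, ← smul_monomial] at hq_mem
  exact (V.smul_mem_iff hc).mp hq_mem

theorem eq_restrictSupport_of_forall_dilate_mem {V : Submodule K (MvPolynomial σ K)}
    (hV : ∀ p ∈ V, ∀ lam : σ → K, dilate lam p ∈ V) :
    V = restrictSupport K {α | monomial α 1 ∈ V} := by
  refine le_antisymm (fun p hp α hα => ?_) ?_
  · have hc : coeff α p ≠ 0 := mem_support_iff.mp hα
    have := monomial_coeff_mem_of_forall_dilate_mem hV hp α
    rwa [← mul_one (coeff α p), ← smul_eq_mul, ← smul_monomial, V.smul_mem_iff hc] at this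
  · rw [restrictSupport_eq_span, Submodule.span_le]
    rintro _ ⟨α, hα, rfl⟩
    exact hα

theorem forall_dilate_mem_iff_exists_eq_restrictSupport (V : Submodule K (MvPolynomial σ K)) :
    (∀ p ∈ V, ∀ lam : σ → K, dilate lam p ∈ V) ↔ ∃ s, V = restrictSupport K s := by
  refine ⟨fun hV => ⟨_, eq_restrictSupport_of_forall_dilate_mem hV⟩, ?_⟩
  rintro ⟨s, rfl⟩ p hp lam
  exact dilate_mem_restrictSupport s lam hp

end MvPolynomial

open MvPolynomial

theorem stmt_3 (d : ℕ) (V : Submodule ℝ (MvPolynomial (Fin d) ℝ)) :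
    (∀ p ∈ V, ∀ lam : Fin d → ℝ,
        bind₁ (fun i => (C (lam i) : MvPolynomial (Fin d) ℝ) * X i) p ∈ V) ↔
      ∃ S : Set (Fin d →₀ ℕ),
        V = Submodule.span ℝ ((fun α => monomial α (1 : ℝ)) '' S) := by
  simpa only [dilate, restrictSupport_eq_span] using
    forall_dilate_mem_iff_exists_eq_restrictSupport V
end

section
/- Fix a positive integer d and natural numbers N₁,…,N_d, and let V be the linear span in ℝ[x₁,…,x_d] of the monomials {x^α : α ∈ ℕ^d and α_k ≤ N_k for at least one index k}. If (p_n) is a sequence of polynomials in V converging pointwise on ℝ^d to a polynomial p, then p belongs to V. -/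
/-!
Let `D = ∏ₖ Δₖ^(Nₖ+1)`, where `Δₖ` is the unit forward difference in `xₖ`. Since `D` is a finite
linear combination of translations, `D p` is the pointwise limit of `D pₙ = 0`, so `D p = 0`.
On monomials, `D x^α = ∏ₖ (Δ^(Nₖ+1) y^(αₖ))(xₖ)`: this vanishes as soon as some `αₖ ≤ Nₖ`, and
otherwise its top monomial is `x^(α - N - 1)`, with the nonzero coefficient
`∏ₖ αₖ (αₖ - 1) ⋯ (αₖ - Nₖ)`. For `α` maximal among the exponents of `p` lying outside `V`,
no other monomial of `p` reaches `x^(α - N - 1)` under `D`, so `D p = 0` forces `p ∈ V`.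
-/

open Finset

namespace Polynomial

variable (R : Type*) [CommRing R]

/-- Newton's formula for the polynomial `x ↦ Δ^m (y ↦ y ^ n) x`. -/
noncomputable def fwdDiffPowPoly (m n : ℕ) : R[X] :=
  ∑ j ∈ range (m + 1), C ((-1) ^ (m - j) * (m.choose j : R)) * (X + C (j : R)) ^ n

variable {R}

theorem coeff_fwdDiffPowPoly (m n t : ℕ) :
    (fwdDiffPowPoly R m n).coeff t =
      n.choose t * (fwdDiff 1)^[m] (fun r : R => r ^ (n - t)) 0 := by
  rw [fwdDiffPowPoly, finsetSum_coeff, fwdDiff_iter_eq_sum_shift, mul_sum]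
  refine sum_congr rfl fun j _ => ?_
  rw [coeff_C_mul, coeff_X_add_C_pow, zsmul_eq_mul]
  push_cast
  ring

theorem coeff_fwdDiffPowPoly_eq_zero {m n t : ℕ} (h : n < t + m) :
    (fwdDiffPowPoly R m n).coeff t = 0 := by
  rw [coeff_fwdDiffPowPoly]
  rcases le_or_gt t n with htn | hnt
  · rw [fwdDiff_iter_pow_eq_zero_of_lt (by omega), Pi.zero_apply, mul_zero]
  · rw [Nat.choose_eq_zero_of_lt hnt, Nat.cast_zero, zero_mul]

theorem coeff_fwdDiffPowPoly_sub {m n : ℕ} (h : m ≤ n) :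
    (fwdDiffPowPoly R m n).coeff (n - m) = n.descFactorial m := by
  rw [coeff_fwdDiffPowPoly, Nat.choose_symm h, Nat.sub_sub_self h, fwdDiff_iter_eq_factorial,
    Pi.natCast_apply, Nat.descFactorial_eq_factorial_mul_choose, Nat.cast_mul, mul_comm]

end Polynomial

namespace MvPolynomial

variable {R σ : Type*} [CommRing R] [Fintype σ] [DecidableEq σ]

theorem coeff_prod_aeval_X (P : σ → Polynomial R) (γ : σ →₀ ℕ) :
    coeff γ (∏ k, Polynomial.aeval (X k) (P k)) = ∏ k, (P k).coeff (γ k) := by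
  simp_rw [Polynomial.aeval_eq_sum_range, prod_univ_sum, coeff_sum, smul_eq_C_mul,
    prod_mul_distrib, ← map_prod, coeff_C_mul, coeff_prod_X_pow]
  have hγ (f : σ → ℕ) : (γ = Finsupp.indicator univ fun k _ => f k) ↔ f = γ := by
    simpa [Finsupp.ext_iff, eq_comm] using _root_.funext_iff.symm
  simp_rw [hγ, mul_ite, mul_one, mul_zero, sum_ite_eq']
  split_ifs with hmem
  · rfl
  · obtain ⟨k, hk⟩ : ∃ k, (P k).natDegree < γ k := by simpa using hmem
    exact (prod_eq_zero (mem_univ k) (Polynomial.coeff_eq_zero_of_natDegree_lt hk)).symm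

/-- The mixed forward difference `∏ₖ Δₖ^(m k)`, expanded as a combination of translations. -/
noncomputable def mixedFwdDiff (m : σ → ℕ) : MvPolynomial σ R →ₗ[R] MvPolynomial σ R :=
  ∑ ε ∈ Fintype.piFinset fun k => range (m k + 1),
    (∏ k, (-1) ^ (m k - ε k) * ((m k).choose (ε k) : R)) •
      (aeval fun k => X k + C (ε k : R)).toLinearMap

theorem eval_mixedFwdDiff (m : σ → ℕ) (x : σ → R) (q : MvPolynomial σ R) :
    eval x (mixedFwdDiff m q) = ∑ ε ∈ Fintype.piFinset fun k => range (m k + 1),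
      (∏ k, (-1) ^ (m k - ε k) * ((m k).choose (ε k) : R)) * eval (fun k => x k + ε k) q := by
  rw [mixedFwdDiff, LinearMap.sum_apply, map_sum]
  refine sum_congr rfl fun ε _ => ?_
  rw [LinearMap.smul_apply, smul_eval, AlgHom.toLinearMap_apply]
  congr 1
  exact (eval₂Hom_bind₁ _ _ _ q).trans (by simp)

theorem mixedFwdDiff_monomial (m : σ → ℕ) (β : σ →₀ ℕ) :
    mixedFwdDiff m (monomial β (1 : R)) =
      ∏ k, Polynomial.aeval (X k) (Polynomial.fwdDiffPowPoly R (m k) (β k)) := by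
  simp [mixedFwdDiff, Polynomial.fwdDiffPowPoly, prod_univ_sum, monomial_eq, smul_eq_C_mul,
    prod_mul_distrib]

theorem coeff_mixedFwdDiff (m : σ → ℕ) (p : MvPolynomial σ R) (γ : σ →₀ ℕ) :
    coeff γ (mixedFwdDiff m p) = ∑ β ∈ p.support,
      coeff β p * ∏ k, (Polynomial.fwdDiffPowPoly R (m k) (β k)).coeff (γ k) := by
  have monomial_eq_smul (β : σ →₀ ℕ) : monomial β (coeff β p) = coeff β p • monomial β 1 := by
    rw [smul_monomial, smul_eq_mul, mul_one]
  conv_lhs => rw [p.as_sum]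
  simp_rw [map_sum, coeff_sum, monomial_eq_smul, map_smul, coeff_smul, mixedFwdDiff_monomial,
    coeff_prod_aeval_X, smul_eq_mul]

theorem mixedFwdDiff_monomial_eq_zero {m : σ → ℕ} {β : σ →₀ ℕ} {k : σ} (h : β k < m k) :
    mixedFwdDiff m (monomial β (1 : R)) = 0 := by
  ext γ
  rw [mixedFwdDiff_monomial, coeff_prod_aeval_X, coeff_zero]
  exact prod_eq_zero (mem_univ k) (Polynomial.coeff_fwdDiffPowPoly_eq_zero (by omega))

theorem restrictSupport_le_ker_mixedFwdDiff (m : σ → ℕ) :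
    restrictSupport R {α | ∃ k, α k < m k} ≤ LinearMap.ker (mixedFwdDiff m) := by
  rw [restrictSupport_eq_span, Submodule.span_le, Set.image_subset_iff]
  rintro β ⟨k, hk⟩
  exact mixedFwdDiff_monomial_eq_zero hk

theorem exists_lt_of_mixedFwdDiff_eq_zero [IsDomain R] [CharZero R] {m : σ → ℕ}
    {p : MvPolynomial σ R} (hp : mixedFwdDiff m p = 0) {α : σ →₀ ℕ} (hα : α ∈ p.support) :
    ∃ k, α k < m k := by
  by_contra! h
  obtain ⟨α₀, hα₀⟩ := (p.support.filter fun α => ∀ k, m k ≤ α k).exists_maximal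
    ⟨α, mem_filter.2 ⟨hα, h⟩⟩
  obtain ⟨hα₀p, hα₀m⟩ := mem_filter.1 hα₀.prop
  have hlt (β) (hβ : β ∈ p.support) (hne : β ≠ α₀) : ∃ k, β k < α₀ k := by
    by_contra! hle
    exact hne (le_antisymm (hα₀.2 (mem_filter.2 ⟨hβ, fun k => (hα₀m k).trans (hle k)⟩) hle) hle)
  let γ : σ →₀ ℕ := Finsupp.equivFunOnFinite.symm fun k => α₀ k - m k
  have := congrArg (coeff γ) hp
  rw [coeff_mixedFwdDiff, coeff_zero, sum_eq_single_of_mem α₀ hα₀p] at this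
  · refine mul_ne_zero (mem_support_iff.1 hα₀p) (prod_ne_zero_iff.2 fun k _ => ?_) this
    rw [show γ k = α₀ k - m k from rfl, Polynomial.coeff_fwdDiffPowPoly_sub (hα₀m k),
      Nat.cast_ne_zero, Ne, Nat.descFactorial_eq_zero_iff_lt, not_lt]
    exact hα₀m k
  · intro β hβ hne
    obtain ⟨k, hk⟩ := hlt β hβ hne
    refine mul_eq_zero_of_right _ (prod_eq_zero (mem_univ k) ?_)
    exact Polynomial.coeff_fwdDiffPowPoly_eq_zero (by show β k < α₀ k - m k + m k; omega)

theorem ker_mixedFwdDiff [IsDomain R] [CharZero R] (m : σ → ℕ) :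
    LinearMap.ker (mixedFwdDiff m) = restrictSupport R {α | ∃ k, α k < m k} :=
  le_antisymm (fun _ hp _ hα => exists_lt_of_mixedFwdDiff_eq_zero hp hα)
    (restrictSupport_le_ker_mixedFwdDiff m)

theorem tendsto_eval_mixedFwdDiff [TopologicalSpace R] [IsTopologicalRing R] {ι : Type*}
    {l : Filter ι} {q : ι → MvPolynomial σ R} {p : MvPolynomial σ R}
    (h : ∀ x, Filter.Tendsto (fun i => eval x (q i)) l (nhds (eval x p))) (m : σ → ℕ)
    (x : σ → R) :
    Filter.Tendsto (fun i => eval x (mixedFwdDiff m (q i))) l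
      (nhds (eval x (mixedFwdDiff m p))) := by
  simp_rw [eval_mixedFwdDiff]
  exact tendsto_finsetSum _ fun ε _ => (h _).const_mul _

end MvPolynomial

open MvPolynomial Filter

theorem stmt_5_general (d : ℕ) (N : Fin d → ℕ)
    (V : Submodule ℝ (MvPolynomial (Fin d) ℝ))
    (hV : V = Submodule.span ℝ {q : MvPolynomial (Fin d) ℝ |
        ∃ α : Fin d →₀ ℕ, (∃ k : Fin d, α k ≤ N k) ∧ q = monomial α (1 : ℝ)})
    (pn : ℕ → MvPolynomial (Fin d) ℝ) (hpn : ∀ n, pn n ∈ V)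
    (p : MvPolynomial (Fin d) ℝ)
    (hconv : ∀ x : Fin d → ℝ,
      Tendsto (fun n => eval x (pn n)) atTop (nhds (eval x p))) :
    p ∈ V := by
  have hV_ker : V = LinearMap.ker (mixedFwdDiff fun k => N k + 1) := by
    rw [ker_mixedFwdDiff, hV, restrictSupport_eq_span]
    congr 1
    ext q
    simp [eq_comm]
  simp only [hV_ker, LinearMap.mem_ker] at hpn ⊢
  refine MvPolynomial.funext fun x => tendsto_nhds_unique
    (tendsto_eval_mixedFwdDiff hconv _ x) ?_
  simp [hpn]

theorem stmt_5 (d : ℕ) (hd : 0 < d) (N : Fin d → ℕ)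
    (V : Submodule ℝ (MvPolynomial (Fin d) ℝ))
    (hV : V = Submodule.span ℝ {q : MvPolynomial (Fin d) ℝ |
        ∃ α : Fin d →₀ ℕ, (∃ k : Fin d, α k ≤ N k) ∧ q = monomial α (1 : ℝ)})
    (pn : ℕ → MvPolynomial (Fin d) ℝ) (hpn : ∀ n, pn n ∈ V)
    (p : MvPolynomial (Fin d) ℝ)
    (hconv : ∀ x : Fin d → ℝ,
      Tendsto (fun n => eval x (pn n)) atTop (nhds (eval x p))) :
    p ∈ V :=
  stmt_5_general d N V hV pn hpn p hconv
end

section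
/- Let V be an ℝ-linear subspace of ℝ[x₁,…,x_d] that is both translation invariant and dilation invariant. Then V equals the linear span of the set of monomials it contains, i.e., V = span{x^α : α ∈ ℕ^d, x^α ∈ V}. -/
/-!
Dilating by a vector `y = (p₁, p₂, …)` of distinct primes acts diagonally on monomials,
`x^α ↦ p^α x^α`, and by unique factorisation the eigenvalues `p^α` are pairwise distinct.
A dilation-invariant `V` is stable under every polynomial in this operator; applied to `p ∈ V`,
the Lagrange interpolation polynomial equal to `1` at `p^α` and `0` at the eigenvalues of the
other monomials of `p` isolates the term `coeff α p • x^α`, which therefore lies in `V`.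
-/

open MvPolynomial

theorem MvPolynomial.bind₁_C_mul_X_monomial {σ R : Type*} [CommSemiring R] (y : σ → R)
    (α : σ →₀ ℕ) (c : R) :
    bind₁ (fun i => C (y i) * X i) (monomial α c) =
      (α.prod fun i n => y i ^ n) • monomial α c := by
  rw [bind₁_monomial, smul_monomial, monomial_eq, Finsupp.prod, Finsupp.prod]
  simp only [mul_pow, Finset.prod_mul_distrib, ← map_pow, ← map_prod, smul_eq_mul, map_mul]
  ring

theorem Finsupp.prod_pow_injective_of_prime {σ : Type*} {P : σ → ℕ} (hP : ∀ i, (P i).Prime)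
    (hinj : Function.Injective P) :
    Function.Injective fun α : σ →₀ ℕ => α.prod fun i n => P i ^ n := by
  have hfact (α : σ →₀ ℕ) : (α.prod fun i n => P i ^ n).factorization = α.mapDomain P := by
    rw [← Finsupp.prod_mapDomain_index (h := fun p n => p ^ n) (fun _ => pow_zero _)
      (fun _ _ _ => pow_add _ _ _)]
    refine Nat.prod_pow_factorization_eq_self fun p hp => ?_
    obtain ⟨i, -, rfl⟩ := Finset.mem_image.mp (Finsupp.mapDomain_support hp)
    exact hP i
  intro α β h
  exact Finsupp.mapDomain_injective hinj (by simpa only [hfact] using congrArg Nat.factorization h)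

theorem Countable.exists_injective_prime (σ : Type*) [Countable σ] :
    ∃ P : σ → ℕ, (∀ i, (P i).Prime) ∧ Function.Injective P := by
  obtain ⟨e, he⟩ := Countable.exists_injective_nat σ
  exact ⟨fun i => Nat.nth Nat.Prime (e i), fun i => Nat.prime_nth_prime (e i),
    (Nat.nth_injective Nat.infinite_setOfPred_prime).comp he⟩

open Polynomial in
theorem Submodule.aeval_apply_mem {K M : Type*} [CommSemiring K] [AddCommMonoid M] [Module K M]
    {f : Module.End K M} {W : Submodule K M} (hW : ∀ x ∈ W, f x ∈ W) (q : K[X]) {x : M}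
    (hx : x ∈ W) : aeval f q x ∈ W := by
  induction q using Polynomial.induction_on' with
  | add p q hp hq => simpa using W.add_mem hp hq
  | monomial n a =>
    have hpow : ∀ k : ℕ, (f ^ k) x ∈ W := fun k => by
      induction k with
      | zero => simpa using hx
      | succ k ih => simpa [pow_succ'] using hW _ ih
    simpa [Polynomial.aeval_monomial, Module.algebraMap_end_apply] using W.smul_mem a (hpow n)

theorem Submodule.mem_of_sum_mem_of_apply_eq_smul {K M ι : Type*} [Field K] [AddCommGroup M]
    [Module K M] [DecidableEq ι] {f : Module.End K M} {W : Submodule K M} (hW : ∀ x ∈ W, f x ∈ W)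
    {s : Finset ι} {μ : ι → K} (hμ : Set.InjOn μ s) {v : ι → M}
    (hv : ∀ i ∈ s, f (v i) = μ i • v i) (hsum : ∑ i ∈ s, v i ∈ W) {j : ι} (hj : j ∈ s) :
    v j ∈ W := by
  have hinterp := Submodule.aeval_apply_mem hW (Lagrange.basis s μ j) hsum
  rwa [map_sum, Finset.sum_eq_single j, Module.End.aeval_apply_of_mem_apply_eq_smul (hv j hj),
    Lagrange.eval_basis_self hμ hj, one_smul] at hinterp
  · intro i hi hij
    rw [Module.End.aeval_apply_of_mem_apply_eq_smul (hv i hi),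
      Lagrange.eval_basis_of_ne hij.symm hi, zero_smul]
  · exact fun h => (h hj).elim

namespace MvPolynomial

variable {σ K : Type*} [Field K] [CharZero K] [Countable σ] {V : Submodule K (MvPolynomial σ K)}

theorem monomial_coeff_mem_of_dilation_invariant
    (hdil : ∀ p ∈ V, ∀ y : σ → K, bind₁ (fun i => C (y i) * X i) p ∈ V)
    {p : MvPolynomial σ K} (hp : p ∈ V) (α : σ →₀ ℕ) : monomial α (coeff α p) ∈ V := by
  classical
  by_cases hα : α ∈ p.support
  swap
  · simp [notMem_support_iff.mp hα]
  obtain ⟨P, hP, hinj⟩ := Countable.exists_injective_prime σ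
  let dilate := (bind₁ fun i => C (P i : K) * X i).toLinearMap
  have hμ : Set.InjOn (fun β : σ →₀ ℕ => β.prod fun i n => (P i : K) ^ n) p.support := by
    refine (Nat.cast_injective.comp (Finsupp.prod_pow_injective_of_prime hP hinj)).injOn.congr ?_
    intro β _
    simp [Finsupp.prod]
  refine Submodule.mem_of_sum_mem_of_apply_eq_smul (f := dilate) (fun q hq => hdil q hq _) hμ
    (fun β _ => bind₁_C_mul_X_monomial _ β _) ?_ hα
  convert hp
  exact support_sum_monomial_coeff p

theorem eq_span_monomials_of_dilation_invariant
    (hdil : ∀ p ∈ V, ∀ y : σ → K, bind₁ (fun i => C (y i) * X i) p ∈ V) :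
    V = Submodule.span K {q | ∃ α, q = monomial α 1 ∧ q ∈ V} := by
  refine le_antisymm (fun p hp => ?_) (Submodule.span_le.mpr fun _ ⟨_, _, hq⟩ => hq)
  rw [← support_sum_monomial_coeff p]
  refine Submodule.sum_mem _ fun α hα => ?_
  have hc : coeff α p ≠ 0 := mem_support_iff.mp hα
  have hmem : monomial α (1 : K) ∈ V := by
    simpa [smul_monomial, hc] using
      V.smul_mem (coeff α p)⁻¹ (monomial_coeff_mem_of_dilation_invariant hdil hp α)
  have hspan : monomial α (1 : K) ∈ Submodule.span K {q | ∃ α, q = monomial α 1 ∧ q ∈ V} :=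
    Submodule.subset_span ⟨α, rfl, hmem⟩
  simpa [smul_monomial] using Submodule.smul_mem _ (coeff α p) hspan

end MvPolynomial

theorem stmt_7_general (d : ℕ) (V : Submodule ℝ (MvPolynomial (Fin d) ℝ))
    (hdil : ∀ p ∈ V, ∀ y : Fin d → ℝ,
      bind₁ (fun i => (C (y i) : MvPolynomial (Fin d) ℝ) * X i) p ∈ V) :
    V = Submodule.span ℝ {q : MvPolynomial (Fin d) ℝ |
      ∃ α : Fin d →₀ ℕ, q = monomial α (1 : ℝ) ∧ q ∈ V} :=
  eq_span_monomials_of_dilation_invariant hdil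

theorem stmt_7 (d : ℕ) (V : Submodule ℝ (MvPolynomial (Fin d) ℝ))
    (htrans : ∀ p ∈ V, ∀ y : Fin d → ℝ,
      bind₁ (fun i => (X i : MvPolynomial (Fin d) ℝ) + C (y i)) p ∈ V)
    (hdil : ∀ p ∈ V, ∀ y : Fin d → ℝ,
      bind₁ (fun i => (C (y i) : MvPolynomial (Fin d) ℝ) * X i) p ∈ V) :
    V = Submodule.span ℝ {q : MvPolynomial (Fin d) ℝ |
      ∃ α : Fin d →₀ ℕ, q = monomial α (1 : ℝ) ∧ q ∈ V} :=
  stmt_7_general d V hdil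
end

section
/- The pointwise-closure property fails for dilation-invariant spaces that are not translation invariant: let P be the set of prime numbers and let V be the linear span in the one-variable polynomial ring ℝ[X] of the monomials {X^k : k ∈ P ∪ 2P ∪ {0}} (where 2P = {2p : p ∈ P}). Then V is dilation invariant, X^100 does not belong to V, and there exists a sequence (p_n) of polynomials in V such that p_n(x) converges to x^100 for every x ∈ ℝ. -/
/-!
Dilations act diagonally on monomials, so a span of monomials is dilation invariant and consists
exactly of the polynomials supported on its exponents; this gives the first two claims.

The third is the easy half of the Müntz–Szász theorem: if `m < λ₀, λ₁, …` are distinct and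
`∑ 1 / λⱼ = ∞`, then `y ^ m` is a uniform limit on `[0, 1]` of combinations of the `y ^ λⱼ`.
As in the classical proof, put `Q₀ = y ^ m` and `Qₙ₊₁(y) = λₙ y ^ λₙ ∫_y^1 Qₙ(t) t ^ (-λₙ-1) dt`.
A maximum principle for `y Qₙ₊₁' = λₙ (Qₙ₊₁ - Qₙ)` with `Qₙ₊₁(1) = 0` keeps `|Qₙ| ≤ 1` on
`[0, 1]`, while the coefficient `∏ⱼ λⱼ / (λⱼ - m)` of `y ^ m` in `Qₙ` tends to infinity.
Applied to the primes and `y = x²`, this approximates `x ^ 100` uniformly on `[-1, 1]` by elements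
of `V`, and the rescalings `rᵐ p(x / r)` with slowly growing `r` converge on all of `ℝ`.
-/

open Polynomial Filter Set Topology Finset

namespace Polynomial

theorem mem_span_X_pow_iff {R : Type*} [Semiring R] (P : ℕ → Prop) {q : R[X]} :
    q ∈ Submodule.span R {q : R[X] | ∃ k : ℕ, P k ∧ q = X ^ k} ↔ ∀ k ∈ q.support, P k := by
  constructor
  · intro hq
    induction hq using Submodule.span_induction with
    | mem q hq =>
      obtain ⟨k, hk, rfl⟩ := hq
      intro n hn
      rw [mem_support_iff, coeff_X_pow] at hn
      split_ifs at hn with h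
      · rwa [h]
      · exact absurd rfl hn
    | zero => simp
    | add p q _ _ hp hq =>
      intro k hk
      rcases Finset.mem_union.1 (support_add hk) with h | h
      exacts [hp k h, hq k h]
    | smul a q _ hq => exact fun k hk => hq k (support_smul a q hk)
  · intro h
    rw [as_sum_support_C_mul_X_pow q]
    refine Submodule.sum_mem _ fun k hk => ?_
    rw [← smul_eq_C_mul]
    exact Submodule.smul_mem _ _ (Submodule.subset_span ⟨k, h k hk, rfl⟩)

theorem comp_C_mul_X_mem_span_X_pow {R : Type*} [CommSemiring R] {P : ℕ → Prop} {q : R[X]}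
    (hq : q ∈ Submodule.span R {q : R[X] | ∃ k : ℕ, P k ∧ q = X ^ k}) (a : R) :
    q.comp (C a * X) ∈ Submodule.span R {q : R[X] | ∃ k : ℕ, P k ∧ q = X ^ k} := by
  rw [mem_span_X_pow_iff] at hq ⊢
  intro k hk
  rw [mem_support_iff, comp_C_mul_X_coeff] at hk
  exact hq k (mem_support_iff.2 (left_ne_zero_of_mul hk))

theorem exists_tendsto_eval_of_forall_abs_eval_sub_pow_le (V : Submodule ℝ ℝ[X])
    (hV : ∀ p ∈ V, ∀ a : ℝ, p.comp (C a * X) ∈ V) (m : ℕ)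
    (happrox : ∀ ε > 0, ∃ p ∈ V, ∀ x ∈ Icc (-1 : ℝ) 1, |p.eval x - x ^ m| ≤ ε) :
    ∃ pn : ℕ → ℝ[X], (∀ n, pn n ∈ V) ∧
      ∀ x : ℝ, Tendsto (fun n => (pn n).eval x) atTop (𝓝 (x ^ m)) := by
  -- The tolerance `(n + 1) ^ -(m + 1)` absorbs the factor `r ^ m` that rescaling by `r = n + 1`
  -- introduces on `[-r, r]`.
  choose q hqV hq using fun n : ℕ => happrox (1 / ((n : ℝ) + 1) ^ (m + 1)) (by positivity)
  refine ⟨fun n => (((n : ℝ) + 1) ^ m) • (q n).comp (C ((n : ℝ) + 1)⁻¹ * X),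
    fun n => V.smul_mem _ (hV _ (hqV n) _), fun x => ?_⟩
  have hclose (n : ℕ) (hx : |x| ≤ n + 1) :
      |(((n : ℝ) + 1) ^ m • (q n).comp (C ((n : ℝ) + 1)⁻¹ * X)).eval x - x ^ m|
        ≤ 1 / ((n : ℝ) + 1) := by
    set r : ℝ := n + 1
    have hr : 0 < r := by positivity
    have hxr : r⁻¹ * x ∈ Icc (-1 : ℝ) 1 := by
      rw [Set.mem_Icc, ← abs_le, abs_mul, abs_inv, abs_of_pos hr, inv_mul_le_iff₀ hr, mul_one]
      exact hx
    calc |(r ^ m • (q n).comp (C r⁻¹ * X)).eval x - x ^ m|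
        = r ^ m * |(q n).eval (r⁻¹ * x) - (r⁻¹ * x) ^ m| := by
          have hxm : x ^ m = r ^ m * (r⁻¹ * x) ^ m := by
            rw [← mul_pow, mul_inv_cancel_left₀ hr.ne']
          rw [eval_smul, eval_comp, eval_mul, eval_C, eval_X, smul_eq_mul, hxm, ← mul_sub,
            abs_mul, abs_of_pos (pow_pos hr m)]
      _ ≤ r ^ m * (1 / r ^ (m + 1)) := mul_le_mul_of_nonneg_left (hq n _ hxr) (by positivity)
      _ = 1 / r := by field_simp; ring
  rw [tendsto_iff_norm_sub_tendsto_zero]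
  refine squeeze_zero' (Eventually.of_forall fun n => norm_nonneg _) ?_
    tendsto_one_div_add_atTop_nhds_zero_nat
  filter_upwards [eventually_ge_atTop ⌈|x|⌉₊] with n hn
  exact hclose n ((Nat.le_ceil _).trans (by exact_mod_cast hn.trans n.le_succ))

end Polynomial

theorem tendsto_prod_range_one_sub_of_not_summable {a : ℕ → ℝ} (h0 : ∀ j, 0 ≤ a j)
    (h1 : ∀ j, a j ≤ 1) (h : ¬ Summable a) :
    Tendsto (fun n => ∏ j ∈ range n, (1 - a j)) atTop (𝓝 0) := by
  have hexp : Tendsto (fun n => Real.exp (-∑ j ∈ range n, a j)) atTop (𝓝 0) :=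
    Real.tendsto_exp_atBot.comp
      (tendsto_neg_atTop_atBot.comp ((not_summable_iff_tendsto_nat_atTop_of_nonneg h0).1 h))
  refine squeeze_zero (fun n => prod_nonneg fun j _ => sub_nonneg.2 (h1 j)) (fun n => ?_) hexp
  rw [← sum_neg_distrib, Real.exp_sum]
  exact prod_le_prod (fun j _ => sub_nonneg.2 (h1 j)) fun j _ => Real.one_sub_le_exp_neg (a j)

theorem Nat.not_summable_one_div_nth_prime : ¬ Summable fun j => (1 : ℝ) / nth Nat.Prime j := by
  rw [Nat.nth_eq_orderIsoOfNat Nat.infinite_setOfPred_prime]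
  exact fun h => Nat.Primes.not_summable_one_div
    ((@Nat.Subtype.orderIsoOfNat _ Nat.infinite_setOfPred_prime.to_subtype).summable_iff.mp h)

namespace Polynomial

theorem coeff_X_mul_derivative {R : Type*} [Semiring R] (p : R[X]) (k : ℕ) :
    (X * derivative p).coeff k = k * p.coeff k := by
  cases k with
  | zero => simp
  | succ k => rw [coeff_X_mul, coeff_derivative, ← Nat.cast_succ, Nat.cast_comm]

theorem eval_le_of_X_mul_derivative_eq {p q : ℝ[X]} {l B : ℝ} (hl : l ≠ 0)
    (hode : X * derivative p = C l * (p - q)) (hp1 : p.eval 1 = 0) (hB : 0 ≤ B)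
    (hq : ∀ y ∈ Icc (0 : ℝ) 1, q.eval y ≤ B) : ∀ y ∈ Icc (0 : ℝ) 1, p.eval y ≤ B := by
  obtain ⟨y₀, hy₀, hmax⟩ :=
    isCompact_Icc.exists_isMaxOn (nonempty_Icc.2 zero_le_one) p.continuous.continuousOn
  refine fun y hy => (hmax hy).trans ?_
  rcases eq_or_lt_of_le hy₀.2 with rfl | hy₀1
  · exact hp1.trans_le hB
  have hcrit : y₀ * (derivative p).eval y₀ = 0 := by
    rcases eq_or_lt_of_le hy₀.1 with rfl | hy₀0
    · exact zero_mul _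
    · rw [← Polynomial.deriv, (hmax.isLocalMax (Icc_mem_nhds hy₀0 hy₀1)).deriv_eq_zero, mul_zero]
  have hval := congrArg (eval y₀) hode
  simp only [eval_mul, eval_X, eval_C, eval_sub, hcrit] at hval
  have : p.eval y₀ = q.eval y₀ := by
    have := (mul_eq_zero.1 hval.symm).resolve_left hl
    linarith
  exact this.trans_le (hq y₀ hy₀)

theorem abs_eval_le_of_X_mul_derivative_eq {p q : ℝ[X]} {l B : ℝ} (hl : l ≠ 0)
    (hode : X * derivative p = C l * (p - q)) (hp1 : p.eval 1 = 0)
    (hq : ∀ y ∈ Icc (0 : ℝ) 1, |q.eval y| ≤ B) : ∀ y ∈ Icc (0 : ℝ) 1, |p.eval y| ≤ B := by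
  have hB : 0 ≤ B := (abs_nonneg _).trans (hq 0 ⟨le_rfl, zero_le_one⟩)
  have hode' : X * derivative (-p) = C l * (-p - -q) := by
    rw [derivative_neg, mul_neg, hode]; ring
  intro y hy
  refine abs_le.2 ⟨?_, eval_le_of_X_mul_derivative_eq hl hode hp1 hB
    (fun t ht => (abs_le.1 (hq t ht)).2) y hy⟩
  have := eval_le_of_X_mul_derivative_eq hl hode' (by simp [hp1]) hB
    (fun t ht => by simpa [neg_le] using (abs_le.1 (hq t ht)).1) y hy
  simp only [eval_neg] at this
  linarith

/-- The closed form of `l y ^ l ∫_y^1 q(t) t ^ (-l-1) dt` when `q.coeff l = 0`: the monomial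
`y ^ k` goes to `l / (l - k) (y ^ k - y ^ l)`. -/
noncomputable def muntzStep (l : ℕ) (q : ℝ[X]) : ℝ[X] :=
  q.sum fun k a => C ((l : ℝ) / (l - k) * a) * (X ^ k - X ^ l)

theorem eval_one_muntzStep (l : ℕ) (q : ℝ[X]) : (muntzStep l q).eval 1 = 0 := by
  simp [muntzStep, Polynomial.sum_def, eval_finsetSum]

theorem coeff_muntzStep_of_ne {l k : ℕ} (q : ℝ[X]) (hk : k ≠ l) :
    (muntzStep l q).coeff k = l / (l - k) * q.coeff k := by
  simp only [muntzStep, Polynomial.sum_def, finsetSum_coeff, coeff_C_mul, coeff_sub, coeff_X_pow,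
    if_neg hk, sub_zero, mul_ite, mul_one, mul_zero, Finset.sum_ite_eq]
  split_ifs with h
  · rfl
  · rw [notMem_support_iff.1 h, mul_zero]

theorem X_mul_derivative_muntzStep {l : ℕ} {q : ℝ[X]} (hq : q.coeff l = 0) :
    X * derivative (muntzStep l q) = C (l : ℝ) * (muntzStep l q - q) := by
  ext k
  rw [coeff_X_mul_derivative, coeff_C_mul, coeff_sub]
  by_cases hk : k = l
  · rw [hk, hq, sub_zero]
  · have hlk : (l : ℝ) - k ≠ 0 := sub_ne_zero.2 (Nat.cast_injective.ne (Ne.symm hk))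
    rw [coeff_muntzStep_of_ne q hk]
    field_simp
    ring

noncomputable def muntzSeq (m : ℕ) (lam : ℕ → ℕ) : ℕ → ℝ[X]
  | 0 => X ^ m
  | n + 1 => muntzStep (lam n) (muntzSeq m lam n)

section muntzSeq

variable {m : ℕ} {lam : ℕ → ℕ}

theorem mem_support_muntzSeq {n k : ℕ} (hk : k ∈ (muntzSeq m lam n).support) :
    k = m ∨ ∃ j < n, lam j = k := by
  induction n generalizing k with
  | zero => exact Or.inl (by simpa [muntzSeq] using hk)
  | succ n ih =>
    by_cases hkn : k = lam n
    · exact Or.inr ⟨n, n.lt_succ_self, hkn.symm⟩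
    rw [mem_support_iff, muntzSeq, coeff_muntzStep_of_ne _ hkn] at hk
    rcases ih (mem_support_iff.2 (right_ne_zero_of_mul hk)) with rfl | ⟨j, hj, rfl⟩
    · exact Or.inl rfl
    · exact Or.inr ⟨j, by omega, rfl⟩

theorem coeff_muntzSeq_lam (hinj : Function.Injective lam) (hm : ∀ j, m < lam j) (n : ℕ) :
    (muntzSeq m lam n).coeff (lam n) = 0 := by
  by_contra h
  rcases mem_support_muntzSeq (mem_support_iff.2 h) with h' | ⟨j, hj, h'⟩
  · exact (hm n).ne h'.symm
  · exact hj.ne (hinj h')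

theorem coeff_muntzSeq_self (hm : ∀ j, m < lam j) (n : ℕ) :
    (muntzSeq m lam n).coeff m = ∏ j ∈ range n, (lam j : ℝ) / (lam j - m) := by
  induction n with
  | zero => simp [muntzSeq]
  | succ n ih =>
    rw [muntzSeq, coeff_muntzStep_of_ne _ (hm n).ne, ih, prod_range_succ, mul_comm]

theorem abs_eval_muntzSeq_le_one (hinj : Function.Injective lam) (hm : ∀ j, m < lam j) (n : ℕ) :
    ∀ y ∈ Icc (0 : ℝ) 1, |(muntzSeq m lam n).eval y| ≤ 1 := by
  induction n with
  | zero =>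
    intro y hy
    rw [muntzSeq, eval_pow, eval_X, abs_pow]
    exact pow_le_one₀ (abs_nonneg y) (abs_le.2 ⟨by linarith [hy.1], hy.2⟩)
  | succ n ih =>
    exact abs_eval_le_of_X_mul_derivative_eq (Nat.cast_ne_zero.2 (by have := hm n; omega))
      (X_mul_derivative_muntzStep (coeff_muntzSeq_lam hinj hm n)) (eval_one_muntzStep _ _) ih

end muntzSeq

theorem exists_forall_abs_eval_sub_pow_le {m : ℕ} (hm0 : 0 < m) {lam : ℕ → ℕ}
    (hinj : Function.Injective lam) (hm : ∀ j, m < lam j)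
    (hdiv : ¬ Summable fun j => (1 : ℝ) / lam j) {ε : ℝ} (hε : 0 < ε) :
    ∃ q : ℝ[X], (∀ k ∈ q.support, ∃ j, lam j = k) ∧
      ∀ y ∈ Icc (0 : ℝ) 1, |q.eval y - y ^ m| ≤ ε := by
  have hlam (j : ℕ) : (m : ℝ) < lam j := Nat.cast_lt.2 (hm j)
  have hm0' : (0 : ℝ) < m := Nat.cast_pos.2 hm0
  have hc_pos (n : ℕ) : 0 < (muntzSeq m lam n).coeff m := by
    rw [coeff_muntzSeq_self hm]
    exact prod_pos fun j _ => div_pos (hm0'.trans (hlam j)) (sub_pos.2 (hlam j))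
  have hc_inv (n : ℕ) :
      ((muntzSeq m lam n).coeff m)⁻¹ = ∏ j ∈ range n, (1 - (m : ℝ) / lam j) := by
    rw [coeff_muntzSeq_self hm, ← prod_inv_distrib]
    refine prod_congr rfl fun j _ => ?_
    have := hm0'.trans (hlam j)
    field_simp
  have htend : Tendsto (fun n => ((muntzSeq m lam n).coeff m)⁻¹) atTop (𝓝 0) := by
    simp_rw [hc_inv]
    refine tendsto_prod_range_one_sub_of_not_summable (fun j => by positivity)
      (fun j => (div_le_one (hm0'.trans (hlam j))).2 (hlam j).le) fun h => hdiv ?_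
    simpa [div_eq_mul_one_div (m : ℝ), summable_mul_left_iff hm0'.ne'] using h
  obtain ⟨n, hn⟩ := (htend.eventually (ge_mem_nhds hε)).exists
  set c := (muntzSeq m lam n).coeff m
  refine ⟨X ^ m - C c⁻¹ * muntzSeq m lam n, fun k hk => ?_, fun y hy => ?_⟩
  · rw [mem_support_iff, coeff_sub, coeff_C_mul, coeff_X_pow] at hk
    by_cases hkm : k = m
    · rw [if_pos hkm, hkm, inv_mul_cancel₀ (hc_pos n).ne', sub_self] at hk
      exact absurd rfl hk
    rw [if_neg hkm, zero_sub, neg_ne_zero] at hk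
    obtain ⟨j, -, hj⟩ :=
      (mem_support_muntzSeq (mem_support_iff.2 (right_ne_zero_of_mul hk))).resolve_left hkm
    exact ⟨j, hj⟩
  · rw [eval_sub, eval_pow, eval_X, eval_mul, eval_C, sub_sub_cancel_left, abs_neg, abs_mul,
      abs_inv, abs_of_pos (hc_pos n)]
    calc c⁻¹ * |(muntzSeq m lam n).eval y| ≤ c⁻¹ * 1 :=
          mul_le_mul_of_nonneg_left (abs_eval_muntzSeq_le_one hinj hm n y hy)
            (inv_nonneg.2 (hc_pos n).le)
      _ ≤ ε := by rwa [mul_one]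

theorem exists_forall_abs_eval_sub_pow_le_of_prime {m : ℕ} (hm0 : 0 < m) {ε : ℝ} (hε : 0 < ε) :
    ∃ q : ℝ[X], (∀ k ∈ q.support, k.Prime) ∧ ∀ y ∈ Icc (0 : ℝ) 1, |q.eval y - y ^ m| ≤ ε := by
  have hmono := Nat.nth_strictMono Nat.infinite_setOfPred_prime
  obtain ⟨q, hq_supp, hq⟩ := exists_forall_abs_eval_sub_pow_le hm0
    (lam := fun j => Nat.nth Nat.Prime (j + (m + 1)))
    (hmono.injective.comp (add_left_injective (m + 1)))
    (fun j => (by omega : m < j + (m + 1)).trans_le (hmono.id_le _))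
    (mt (summable_nat_add_iff (f := fun j => (1 : ℝ) / Nat.nth Nat.Prime j) (m + 1)).1
      Nat.not_summable_one_div_nth_prime) hε
  refine ⟨q, fun k hk => ?_, hq⟩
  obtain ⟨j, rfl⟩ := hq_supp k hk
  exact Nat.prime_nth_prime _

end Polynomial

theorem stmt_10
    (V : Submodule ℝ (Polynomial ℝ))
    (hV : V = Submodule.span ℝ {q : Polynomial ℝ |
      ∃ k : ℕ, (Nat.Prime k ∨ (∃ p : ℕ, Nat.Prime p ∧ k = 2 * p) ∨ k = 0) ∧
        q = X ^ k}) :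
    (∀ p ∈ V, ∀ lam : ℝ, p.comp (C lam * X) ∈ V) ∧
    (X ^ 100 : Polynomial ℝ) ∉ V ∧
    ∃ pn : ℕ → Polynomial ℝ, (∀ n, pn n ∈ V) ∧
      ∀ x : ℝ, Tendsto (fun n => (pn n).eval x) atTop (nhds (x ^ 100)) := by
  have hdil : ∀ p ∈ V, ∀ a : ℝ, p.comp (C a * X) ∈ V := by
    rw [hV]
    exact fun _ hp a => comp_C_mul_X_mem_span_X_pow hp a
  refine ⟨hdil, fun h => ?_,
    exists_tendsto_eval_of_forall_abs_eval_sub_pow_le _ hdil 100 fun ε hε => ?_⟩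
  · rw [hV, mem_span_X_pow_iff] at h
    rcases h 100 (by simp) with h | ⟨p, hp, h⟩ | h
    · norm_num at h
    · obtain rfl : p = 50 := by omega
      norm_num at hp
    · omega
  obtain ⟨q, hq_prime, hq⟩ := exists_forall_abs_eval_sub_pow_le_of_prime (m := 50) (by norm_num) hε
  refine ⟨expand ℝ 2 q, ?_, fun x hx => ?_⟩
  · rw [hV, mem_span_X_pow_iff]
    intro k hk
    rw [mem_support_iff, coeff_expand two_pos] at hk
    split_ifs at hk with h2
    · exact Or.inr (Or.inl ⟨k / 2, hq_prime _ (mem_support_iff.2 hk), by omega⟩)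
    · exact absurd rfl hk
  · have hx2 : x ^ 2 ∈ Icc (0 : ℝ) 1 := ⟨sq_nonneg x, (sq_le_one_iff_abs_le_one x).2 (abs_le.2 hx)⟩
    simpa [expand_eval, ← pow_mul] using hq (x ^ 2) hx2
end

section
/- Let m be a positive integer and let c be a polynomial in ℝ[x₁,…,x_m]. If the mixed partial derivative ∂^{(1,1,…,1)} (x₁x₂⋯x_m · c), applying one formal partial derivative in each of the m variables to the product of c with the monomial x₁x₂⋯x_m, is the zero polynomial, then c is the zero polynomial. -/
/-!
Differentiating once in every variable sends `x^d · x₁⋯x_m` to `(∏ i, (d i + 1)) • x^d`,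
so the coefficient of `x^d` in `∂^{(1,…,1)} (x₁⋯x_m · c)` is the coefficient of `x^d` in `c`
times the positive number `∏ i, (d i + 1)`.
-/

open MvPolynomial

/-- The mixed partial derivative `∂^{(1,…,1)}`, applying `pderiv i` once in
each of the `m` variables. -/
noncomputable def mixedPDeriv (m : ℕ) :
    Module.End ℝ (MvPolynomial (Fin m) ℝ) :=
  (List.ofFn fun i : Fin m =>
    ((pderiv i).toLinearMap : Module.End ℝ (MvPolynomial (Fin m) ℝ))).prod

namespace MvPolynomial

variable {σ R : Type*} [CommSemiring R]

theorem coeff_list_prod_pderiv {l : List σ} (hl : l.Nodup) (p : MvPolynomial σ R)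
    (d : σ →₀ ℕ) :
    coeff d ((l.map fun i => ((pderiv i).toLinearMap : Module.End R (MvPolynomial σ R))).prod p)
      = coeff (d + (l.map fun i => Finsupp.single i 1).sum) p
          * (l.map fun i => (d i + 1 : R)).prod := by
  induction l generalizing d with
  | nil => simp
  | cons f l ih =>
    obtain ⟨hf, hl⟩ := List.nodup_cons.mp hl
    have hshift : (l.map fun i => (((d + Finsupp.single f 1 : σ →₀ ℕ) i : ℕ) + 1 : R))
        = l.map fun i => (d i + 1 : R) :=
      List.map_congr_left fun i hi => by
        rw [Finsupp.add_apply, Finsupp.single_eq_of_ne (ne_of_mem_of_not_mem hi hf), add_zero]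
    simp only [List.map_cons, List.prod_cons, List.sum_cons, Module.End.mul_apply,
      Derivation.coeFn_coe, coeff_pderiv, ih hl, hshift, add_assoc]
    ring

end MvPolynomial

theorem coeff_mixedPDeriv_prod_X_mul {m : ℕ} (c : MvPolynomial (Fin m) ℝ) (d : Fin m →₀ ℕ) :
    coeff d (mixedPDeriv m ((∏ i, (X i : MvPolynomial (Fin m) ℝ)) * c))
      = (∏ i, ((d i : ℝ) + 1)) * coeff d c := by
  have hX : (∏ i, (X i : MvPolynomial (Fin m) ℝ)) = monomial (∑ i, Finsupp.single i 1) 1 :=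
    (monomial_sum_one _ _).symm
  rw [mixedPDeriv, List.ofFn_eq_map, coeff_list_prod_pderiv (List.nodup_finRange m),
    ← Fin.sum_univ_def, ← Fin.prod_univ_def, hX, add_comm, coeff_monomial_mul, one_mul, mul_comm]

theorem stmt_12_general (m : ℕ) (c : MvPolynomial (Fin m) ℝ)
    (h : mixedPDeriv m ((∏ i, (X i : MvPolynomial (Fin m) ℝ)) * c) = 0) :
    c = 0 := by
  ext d
  have hd := coeff_mixedPDeriv_prod_X_mul c d
  rw [h, coeff_zero, eq_comm, mul_eq_zero] at hd
  exact hd.resolve_left (Finset.prod_pos fun i _ => by positivity).ne'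

theorem stmt_12 (m : ℕ) (hm : 0 < m) (c : MvPolynomial (Fin m) ℝ)
    (h : mixedPDeriv m ((∏ i, (X i : MvPolynomial (Fin m) ℝ)) * c) = 0) :
    c = 0 :=
  stmt_12_general m c h
end

section
/- Let W be an ℝ-linear subspace of ℝ[x,y] (polynomials in two variables) that is both translation invariant and dilation invariant, and suppose W contains the polynomial (x+y)^n for every natural number n. Then W is the whole polynomial ring ℝ[x,y]. -/
open MvPolynomial

/-! Dilating `(x + y) ^ n` by `(1, t)` gives `∑ₖ tᵏ • (n.choose k) • xⁿ⁻ᵏ yᵏ ∈ W` for every real `t`.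
A vector-valued polynomial in `t` that lies in `W` for infinitely many `t` has all its coefficients
in `W` (test against linear functionals vanishing on `W`), so every monomial lies in `W`. -/

theorem Submodule.mem_of_forall_sum_pow_smul_mem {K V : Type*} [Field K] [Infinite K]
    [AddCommGroup V] [Module K V] (W : Submodule K V) (s : Finset ℕ) (v : ℕ → V)
    (h : ∀ t : K, ∑ k ∈ s, t ^ k • v k ∈ W) {k : ℕ} (hk : k ∈ s) : v k ∈ W := by
  rw [← Submodule.Quotient.mk_eq_zero W]
  refine (Module.forall_dual_apply_eq_zero_iff K _).mp fun φ => ?_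
  set ψ := φ ∘ₗ W.mkQ
  have hψ : ∀ x ∈ W, ψ x = 0 := fun x hx => by
    simp [ψ, (Submodule.Quotient.mk_eq_zero W).mpr hx]
  set p : Polynomial K := ∑ j ∈ s, Polynomial.monomial j (ψ (v j))
  have hp : p = 0 := Polynomial.funext fun t => by
    simpa [p, Polynomial.eval_finsetSum, mul_comm] using hψ _ (h t)
  simpa [p, ψ, Polynomial.finsetSum_coeff, Polynomial.coeff_monomial, hk] using
    congrArg (Polynomial.coeff · k) hp

theorem MvPolynomial.submodule_eq_top_of_monomial_mem {σ R : Type*} [CommSemiring R]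
    (W : Submodule R (MvPolynomial σ R)) (h : ∀ d, monomial d (1 : R) ∈ W) : W = ⊤ := by
  rw [eq_top_iff, ← (basisMonomials σ R).span_eq, Submodule.span_le]
  rintro _ ⟨d, rfl⟩
  simpa using h d

theorem MvPolynomial.monomial_one_fin_two {R : Type*} [CommSemiring R] (d : Fin 2 →₀ ℕ) :
    monomial d (1 : R) = X 0 ^ d 0 * X 1 ^ d 1 := by
  rw [monomial_eq, C_1, one_mul, Finsupp.prod_fintype _ _ (fun _ => pow_zero _), Fin.prod_univ_two]

theorem MvPolynomial.bind₁_dilate_X_zero_add_X_one_pow {R : Type*} [CommSemiring R]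
    (t : R) (n : ℕ) :
    bind₁ (fun i => (C (![1, t] i) : MvPolynomial (Fin 2) R) * X i) ((X 0 + X 1) ^ n) =
      ∑ k ∈ Finset.range (n + 1), t ^ k • ((n.choose k : R) • (X 0 ^ (n - k) * X 1 ^ k)) := by
  rw [map_pow, map_add, bind₁_X_right, bind₁_X_right, add_comm, add_pow]
  refine Finset.sum_congr rfl fun k _ => ?_
  simp only [Matrix.cons_val_zero, Matrix.cons_val_one, C_1, one_mul, smul_eq_C_mul, C_pow,
    map_natCast]
  ring

theorem stmt_13_general (W : Submodule ℝ (MvPolynomial (Fin 2) ℝ))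
    (hdil : ∀ p ∈ W, ∀ y : Fin 2 → ℝ,
      bind₁ (fun i => (C (y i) : MvPolynomial (Fin 2) ℝ) * X i) p ∈ W)
    (hpow : ∀ n : ℕ, ((X 0 + X 1 : MvPolynomial (Fin 2) ℝ)) ^ n ∈ W) :
    W = ⊤ := by
  refine submodule_eq_top_of_monomial_mem W fun d => ?_
  set n := d 0 + d 1
  have hcoeff := W.mem_of_forall_sum_pow_smul_mem (Finset.range (n + 1)) _
    (fun t => bind₁_dilate_X_zero_add_X_one_pow t n ▸ hdil _ (hpow n) ![1, t])
    (Finset.mem_range.mpr (Nat.lt_succ_of_le (Nat.le_add_left (d 1) (d 0))))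
  rw [W.smul_mem_iff (Nat.cast_ne_zero.mpr (Nat.choose_pos (Nat.le_add_left _ _)).ne'),
    Nat.add_sub_cancel] at hcoeff
  rwa [monomial_one_fin_two]

theorem stmt_13 (W : Submodule ℝ (MvPolynomial (Fin 2) ℝ))
    (htrans : ∀ p ∈ W, ∀ y : Fin 2 → ℝ,
      bind₁ (fun i => (X i : MvPolynomial (Fin 2) ℝ) + C (y i)) p ∈ W)
    (hdil : ∀ p ∈ W, ∀ y : Fin 2 → ℝ,
      bind₁ (fun i => (C (y i) : MvPolynomial (Fin 2) ℝ) * X i) p ∈ W)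
    (hpow : ∀ n : ℕ, ((X 0 + X 1 : MvPolynomial (Fin 2) ℝ)) ^ n ∈ W) :
    W = ⊤ :=
  stmt_13_general W hdil hpow
end

section
/- Let V be the set of all polynomials in ℝ[x,y] of the form (x,y) ↦ q(x+y) with q a one-variable real polynomial, i.e., the image of Polynomial ℝ under the ring homomorphism sending the variable to X+Y. Then V is a translation-invariant linear subspace of ℝ[x,y], and the quotient vector space ℝ[x,y]/V is infinite-dimensional (V has infinite codimension). -/
/-!
A translate of `q(x + y)` is `q(x + y + c)` with `c = y₀ + y₁`, again a polynomial in `x + y`.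
Every polynomial in `x + y` is killed by `∂ₓ - ∂ᵧ`, and the linear map
`p ↦ (∂ₓ p - ∂ᵧ p)(t, 0)` is onto `ℝ[t]`, since it sends `-y q(x)` to `q`. Hence the quotient
by these polynomials surjects onto the infinite-dimensional space `ℝ[t]`.
-/

open MvPolynomial

theorem Polynomial.algHom_mem_range_aeval {R A : Type*} [CommSemiring R] [CommSemiring A]
    [Algebra R A] (φ : A →ₐ[R] A) {a : A} {r : Polynomial R} (h : φ a = Polynomial.aeval a r)
    {p : A} (hp : p ∈ LinearMap.range (Polynomial.aeval a : Polynomial R →ₐ[R] A).toLinearMap) :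
    φ p ∈ LinearMap.range (Polynomial.aeval a : Polynomial R →ₐ[R] A).toLinearMap := by
  obtain ⟨q, rfl⟩ := hp
  refine ⟨q.comp r, ?_⟩
  simp only [AlgHom.toLinearMap_apply]
  rw [Polynomial.aeval_comp, ← h, Polynomial.aeval_algHom_apply]

namespace MvPolynomial

variable {R : Type*} [CommRing R]

theorem bind₁_X_add_C_X_zero_add_X_one (y : Fin 2 → R) :
    bind₁ (fun i => X i + C (y i)) (X 0 + X 1 : MvPolynomial (Fin 2) R) =
      Polynomial.aeval (X 0 + X 1) (Polynomial.X + Polynomial.C (y 0 + y 1)) := by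
  simp only [map_add, bind₁_X_right, Polynomial.aeval_X, Polynomial.aeval_C, algebraMap_eq]
  ring

noncomputable def antidiagDerivOnAxis : MvPolynomial (Fin 2) R →ₗ[R] Polynomial R :=
  (aeval ![(Polynomial.X : Polynomial R), 0]).toLinearMap ∘ₗ
    (pderiv (0 : Fin 2) - pderiv 1 : Derivation R (MvPolynomial (Fin 2) R) _).toLinearMap

theorem range_aeval_X_zero_add_X_one_le_ker_antidiagDerivOnAxis :
    LinearMap.range (Polynomial.aeval (X 0 + X 1 : MvPolynomial (Fin 2) R) :
      Polynomial R →ₐ[R] MvPolynomial (Fin 2) R).toLinearMap ≤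
      LinearMap.ker (antidiagDerivOnAxis (R := R)) := by
  rintro _ ⟨q, rfl⟩
  simp [antidiagDerivOnAxis]

theorem antidiagDerivOnAxis_X_one_mul_aeval_X_zero (q : Polynomial R) :
    antidiagDerivOnAxis (X 1 * Polynomial.aeval (X 0) q) = -q := by
  have hq : aeval ![Polynomial.X, 0] (Polynomial.aeval (X 0 : MvPolynomial (Fin 2) R) q) = q := by
    rw [← Polynomial.aeval_algHom_apply]
    simp
  simp [antidiagDerivOnAxis, hq]

theorem antidiagDerivOnAxis_surjective :
    Function.Surjective (antidiagDerivOnAxis (R := R)) := fun q =>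
  ⟨X 1 * Polynomial.aeval (X 0) (-q), by rw [antidiagDerivOnAxis_X_one_mul_aeval_X_zero, neg_neg]⟩

theorem not_finite_quotient_range_aeval_X_zero_add_X_one [Nontrivial R] :
    ¬ Module.Finite R (MvPolynomial (Fin 2) R ⧸
      LinearMap.range (Polynomial.aeval (X 0 + X 1 : MvPolynomial (Fin 2) R) :
        Polynomial R →ₐ[R] MvPolynomial (Fin 2) R).toLinearMap) := by
  intro hfin
  have hsurj : Function.Surjective (Submodule.liftQ _ _
      (range_aeval_X_zero_add_X_one_le_ker_antidiagDerivOnAxis (R := R))) := by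
    rw [← LinearMap.range_eq_top, Submodule.range_liftQ, LinearMap.range_eq_top]
    exact antidiagDerivOnAxis_surjective
  exact Polynomial.not_finite (Module.Finite.of_surjective _ hsurj)

end MvPolynomial

theorem stmt_14
    (V : Submodule ℝ (MvPolynomial (Fin 2) ℝ))
    (hV : V = LinearMap.range
      (Polynomial.aeval (X 0 + X 1 : MvPolynomial (Fin 2) ℝ) :
        Polynomial ℝ →ₐ[ℝ] MvPolynomial (Fin 2) ℝ).toLinearMap) :
    (∀ p ∈ V, ∀ y : Fin 2 → ℝ,
      bind₁ (fun i => (X i : MvPolynomial (Fin 2) ℝ) + C (y i)) p ∈ V) ∧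
    ¬ FiniteDimensional ℝ (MvPolynomial (Fin 2) ℝ ⧸ V) := by
  subst hV
  exact ⟨fun p hp y => Polynomial.algHom_mem_range_aeval _ (bind₁_X_add_C_X_zero_add_X_one y) hp,
    not_finite_quotient_range_aeval_X_zero_add_X_one⟩
end
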